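/- arXiv:1709.02591 — 2 statements merged into one kernel-verified Lean document; each statement's English description precedes it below -/
import Mathlib

section
/- Let d ≥ 1, σ ∈ (0,1), τ > 0, m ≥ 0. There is a constant C, depending only on d, σ, τ, m, with the following property. Let f, w : ℝ^d → ℂ be measurable functions such that the functions ξ ↦ e^{τ⟨ξ⟩^σ}⟨ξ⟩^m f(ξ), ξ ↦ e^{τ⟨ξ⟩^σ} f(ξ), ξ ↦ ⟨ξ⟩^m w(ξ), and w itself all belong to L²(ℝ^d). Then the function g defined by g(ξ) = ∫_{ℝ^d} e^{τ⟨ξ⟩^σ − τ⟨η⟩^σ} f(ξ − η) w(η) dη satisfies ‖⟨·⟩^m g‖_{L²} ≤ C · ( ‖e^{τ⟨·⟩^σ}⟨·⟩^m f‖_{L²} · ‖w‖_{L²} + ‖e^{τ⟨·⟩^σ} f‖_{L²} · ‖⟨·⟩^m w‖_{L²} ). -/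
/-!
Write `A = ⟨ξ - η⟩` and `B = ⟨η⟩`, so that `⟨ξ⟩ ≤ A + B`. Concavity of `t ↦ t ^ σ` improves the
subadditivity of `t ^ σ` by a gain on the smaller variable:
`⟨ξ⟩^σ ≤ A^σ + B^σ - (2 - 2^σ) min(A, B)^σ`. Hence, with `c = τ (2 - 2^σ) > 0`, the kernel obeys
`⟨ξ⟩^m e^{τ⟨ξ⟩^σ - τB^σ} ≤ 2^m (A^m + B^m) e^{τA^σ} (e^{-cA^σ} + e^{-cB^σ})`.
The damping weight `a = e^{-c⟨·⟩^σ}` is in `L²`, so whichever factor of a convolution it is attached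
to lands in `L¹` by Cauchy–Schwarz, and Young's inequality `‖u ⋆ v‖₂ ≤ ‖u‖₁ ‖v‖₂` bounds each of
the four resulting convolutions by one of the two products on the right.
-/

open MeasureTheory Real
open scoped FourierTransform ENNReal

noncomputable section

/-- `ℝ^d` as a Euclidean space. -/
abbrev E (d : ℕ) := EuclideanSpace ℝ (Fin d)

/-- The Japanese bracket `⟨ξ⟩ = (1 + |ξ|²)^{1/2}`. -/
def jap {d : ℕ} (ξ : E d) : ℝ := Real.sqrt (1 + ‖ξ‖ ^ 2)

theorem ConcaveOn.map_add_add_le {f : ℝ → ℝ} {s : Set ℝ} (hf : ConcaveOn ℝ s f) {x y h : ℝ}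
    (hx : x ∈ s) (hyh : y + h ∈ s) (hxy : x ≤ y) (hh : 0 ≤ h) :
    f (y + h) + f x ≤ f y + f (x + h) := by
  rcases (hxy.trans (le_add_of_nonneg_right hh)).eq_or_lt with hD | hD
  · obtain rfl : h = 0 := by linarith
    obtain rfl : y = x := by linarith
    simp
  have hD' : 0 < y + h - x := sub_pos.mpr hD
  have hsum : h / (y + h - x) + (y - x) / (y + h - x) = 1 := by field_simp; ring
  have h₁ := hf.2 hx hyh (div_nonneg hh hD'.le) (div_nonneg (sub_nonneg.mpr hxy) hD'.le) hsum
  have h₂ := hf.2 hx hyh (div_nonneg (sub_nonneg.mpr hxy) hD'.le) (div_nonneg hh hD'.le)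
    (by rw [add_comm, hsum])
  have e₁ : h / (y + h - x) * x + (y - x) / (y + h - x) * (y + h) = y := by field_simp; ring
  have e₂ : (y - x) / (y + h - x) * x + h / (y + h - x) * (y + h) = x + h := by field_simp; ring
  simp only [smul_eq_mul, e₁, e₂] at h₁ h₂
  calc f (y + h) + f x = (h / (y + h - x) + (y - x) / (y + h - x)) * (f x + f (y + h)) := by
        rw [hsum]; ring
    _ ≤ f y + f (x + h) := by linarith

theorem rpow_le_add_rpow_sub_min {σ A B S : ℝ} (hσ0 : 0 ≤ σ) (hσ1 : σ ≤ 1) (hA : 0 ≤ A)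
    (hB : 0 ≤ B) (hS : 0 ≤ S) (hSAB : S ≤ A + B) :
    S ^ σ ≤ A ^ σ + B ^ σ - (2 - 2 ^ σ) * min A B ^ σ := by
  wlog hAB : A ≤ B generalizing A B
  · have := this hB hA (by linarith) (by linarith)
    rw [min_comm]; linarith
  have hconc := (Real.concaveOn_rpow hσ0 hσ1).map_add_add_le (x := A) (y := B) (h := A)
    hA (by simp only [Set.mem_Ici]; linarith) hAB hA
  rw [← two_mul, Real.mul_rpow zero_le_two hA, add_comm B A] at hconc
  rw [min_eq_left hAB]
  nlinarith [Real.rpow_le_rpow hS hSAB hσ0]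

theorem add_rpow_le_two_rpow_mul_add_rpow {A B m : ℝ} (hA : 0 ≤ A) (hB : 0 ≤ B) (hm : 0 ≤ m) :
    (A + B) ^ m ≤ 2 ^ m * (A ^ m + B ^ m) := by
  wlog hAB : A ≤ B generalizing A B
  · rw [add_comm A, add_comm (A ^ m)]; exact this hB hA (by linarith)
  calc (A + B) ^ m ≤ (2 * B) ^ m := Real.rpow_le_rpow (by positivity) (by linarith) hm
    _ = 2 ^ m * B ^ m := Real.mul_rpow zero_le_two hB
    _ ≤ 2 ^ m * (A ^ m + B ^ m) := by gcongr; exact le_add_of_nonneg_left (Real.rpow_nonneg hA m)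

theorem rpow_mul_exp_sub_le {σ τ m A B S : ℝ} (hσ0 : 0 ≤ σ) (hσ1 : σ ≤ 1) (hτ : 0 ≤ τ)
    (hm : 0 ≤ m) (hA : 0 ≤ A) (hB : 0 ≤ B) (hS : 0 ≤ S) (hSAB : S ≤ A + B) :
    S ^ m * exp (τ * S ^ σ - τ * B ^ σ) ≤ 2 ^ m * (A ^ m + B ^ m) * exp (τ * A ^ σ) *
      (exp (-(τ * (2 - 2 ^ σ)) * A ^ σ) + exp (-(τ * (2 - 2 ^ σ)) * B ^ σ)) := by
  have hpow : S ^ m ≤ 2 ^ m * (A ^ m + B ^ m) :=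
    (Real.rpow_le_rpow hS hSAB hm).trans (add_rpow_le_two_rpow_mul_add_rpow hA hB hm)
  have hgain : exp (τ * S ^ σ - τ * B ^ σ) ≤
      exp (τ * A ^ σ) * exp (-(τ * (2 - 2 ^ σ)) * min A B ^ σ) := by
    rw [← exp_add]
    gcongr
    nlinarith [mul_le_mul_of_nonneg_left (rpow_le_add_rpow_sub_min hσ0 hσ1 hA hB hS hSAB) hτ]
  have hmin : exp (-(τ * (2 - 2 ^ σ)) * min A B ^ σ) ≤
      exp (-(τ * (2 - 2 ^ σ)) * A ^ σ) + exp (-(τ * (2 - 2 ^ σ)) * B ^ σ) := by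
    rcases min_choice A B with h | h <;> rw [h] <;> linarith [exp_pos (-(τ * (2 - 2 ^ σ)) * A ^ σ),
      exp_pos (-(τ * (2 - 2 ^ σ)) * B ^ σ)]
  calc S ^ m * exp (τ * S ^ σ - τ * B ^ σ)
      ≤ (2 ^ m * (A ^ m + B ^ m)) * (exp (τ * A ^ σ) *
          (exp (-(τ * (2 - 2 ^ σ)) * A ^ σ) + exp (-(τ * (2 - 2 ^ σ)) * B ^ σ))) := by
        gcongr
        exact hgain.trans (by gcongr)
    _ = _ := by ring

theorem exists_rpow_le_mul_exp_mul_rpow {σ ε : ℝ} (hσ : 0 < σ) (hε : 0 < ε) (k : ℝ) :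
    ∃ C, ∀ u : ℝ, 1 ≤ u → u ^ k ≤ C * exp (ε * u ^ σ) := by
  obtain ⟨n, hn⟩ := exists_nat_ge (k / σ)
  refine ⟨n.factorial / ε ^ n, fun u hu => ?_⟩
  have hv : 0 ≤ ε * u ^ σ := by positivity
  calc u ^ k ≤ u ^ (σ * n) :=
        Real.rpow_le_rpow_of_exponent_le hu (by rw [div_le_iff₀ hσ] at hn; linarith)
    _ = (n.factorial / ε ^ n) * ((ε * u ^ σ) ^ n / n.factorial) := by
        rw [Real.rpow_mul (by linarith), Real.rpow_natCast, mul_pow]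
        field_simp
    _ ≤ (n.factorial / ε ^ n) * exp (ε * u ^ σ) := by
        gcongr; exact Real.pow_div_factorial_le_exp _ hv n

theorem ENNReal.rpow_half_sq (a : ℝ≥0∞) : (a ^ (1 / 2 : ℝ)) ^ 2 = a := by
  rw [← ENNReal.rpow_natCast, ← ENNReal.rpow_mul]; norm_num

section LpBounds

variable {α : Type*} [MeasurableSpace α] {μ : Measure α}

theorem sq_eLpNorm_two (f : α → ℝ≥0∞) : eLpNorm f 2 μ ^ 2 = ∫⁻ x, f x ^ 2 ∂μ := by
  simpa using eLpNorm_nnreal_pow_eq_lintegral (f := f) (μ := μ) (p := 2) two_ne_zero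

theorem lintegral_mul_le_eLpNorm_two_mul_eLpNorm_two {f g : α → ℝ≥0∞} (hf : AEMeasurable f μ)
    (hg : AEMeasurable g μ) : ∫⁻ x, f x * g x ∂μ ≤ eLpNorm f 2 μ * eLpNorm g 2 μ := by
  simpa [eLpNorm_eq_lintegral_rpow_enorm_toReal] using
    ENNReal.lintegral_mul_le_Lp_mul_Lq μ Real.HolderConjugate.two_two hf hg

theorem eLpNorm_ofReal_mul_enorm {F : Type*} [NormedAddCommGroup F] [NormedSpace ℝ F]
    {r : α → ℝ} (hr : ∀ x, 0 ≤ r x) (u : α → F) (p : ℝ≥0∞) :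
    eLpNorm (fun x => ENNReal.ofReal (r x) * ‖u x‖ₑ) p μ = eLpNorm (fun x => r x • u x) p μ := by
  rw [← eLpNorm_enorm (fun x => r x • u x)]
  simp_rw [enorm_smul, Real.enorm_of_nonneg (hr _)]

end LpBounds

section LConvolution

variable {G : Type*} [MeasurableSpace G] [AddCommGroup G] [MeasurableAdd₂ G] [MeasurableNeg G]
  {μ : Measure G}

theorem lconvolution_sq_le {f g : G → ℝ≥0∞} (hf : Measurable f) (hg : Measurable g) (x : G) :
    (f ⋆ₗ[μ] g) x ^ 2 ≤ (∫⁻ y, f y ∂μ) * (f ⋆ₗ[μ] fun y => g y ^ 2) x := by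
  have hsplit : ∀ y, f y * g (-y + x) =
      f y ^ (1 / 2 : ℝ) * (f y * g (-y + x) ^ 2) ^ (1 / 2 : ℝ) := fun y => by
    rw [ENNReal.mul_rpow_of_nonneg _ _ (by norm_num), ← mul_assoc,
      ← ENNReal.rpow_add_of_nonneg _ _ (by norm_num) (by norm_num),
      ← ENNReal.rpow_natCast, ← ENNReal.rpow_mul]
    norm_num
  have hmeas : Measurable fun y => f y * g (-y + x) ^ 2 :=
    hf.mul ((hg.comp (measurable_neg.add_const x)).pow_const 2)
  calc (f ⋆ₗ[μ] g) x ^ 2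
      ≤ ((∫⁻ y, f y ∂μ) ^ (1 / 2 : ℝ) * (f ⋆ₗ[μ] fun y => g y ^ 2) x ^ (1 / 2 : ℝ)) ^ 2 := by
        simp_rw [lconvolution_def, hsplit]
        gcongr
        exact ENNReal.lintegral_mul_norm_pow_le hf.aemeasurable hmeas.aemeasurable
          (by norm_num) (by norm_num) (by norm_num)
    _ = (∫⁻ y, f y ∂μ) * (f ⋆ₗ[μ] fun y => g y ^ 2) x := by
        rw [mul_pow, ENNReal.rpow_half_sq, ENNReal.rpow_half_sq]

def dampedLConvolution (a f g : G → ℝ≥0∞) (μ : Measure G) (x : G) : ℝ≥0∞ :=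
  ∫⁻ y, (a (x - y) + a y) * f (x - y) * g y ∂μ

theorem dampedLConvolution_eq {a f g : G → ℝ≥0∞} (ha : Measurable a) (hf : Measurable f)
    (hg : Measurable g) : dampedLConvolution a f g μ = g ⋆ₗ[μ] (a * f) + (a * g) ⋆ₗ[μ] f := by
  ext x
  simp only [dampedLConvolution, Pi.add_apply, lconvolution_def, Pi.mul_apply, neg_add_eq_sub]
  rw [← lintegral_add_left (by fun_prop)]
  exact lintegral_congr fun y => by ring

variable [SFinite μ]

@[fun_prop]
theorem measurable_dampedLConvolution {a f g : G → ℝ≥0∞} (ha : Measurable a)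
    (hf : Measurable f) (hg : Measurable g) : Measurable (dampedLConvolution a f g μ) := by
  rw [dampedLConvolution_eq ha hf hg]
  exact (measurable_lconvolution _ hg (ha.mul hf)).add (measurable_lconvolution _ (ha.mul hg) hf)

variable [μ.IsAddLeftInvariant]

theorem lintegral_lconvolution {f g : G → ℝ≥0∞} (hf : Measurable f) (hg : Measurable g) :
    ∫⁻ x, (f ⋆ₗ[μ] g) x ∂μ = (∫⁻ x, f x ∂μ) * ∫⁻ x, g x ∂μ := by
  simp_rw [lconvolution_def]
  rw [lintegral_lintegral_swap (by fun_prop)]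
  calc ∫⁻ y, ∫⁻ x, f y * g (-y + x) ∂μ ∂μ = ∫⁻ y, f y * ∫⁻ x, g x ∂μ ∂μ :=
        lintegral_congr fun y => by
          rw [lintegral_const_mul _ (by fun_prop), lintegral_add_left_eq_self]
    _ = _ := lintegral_mul_const _ hf

theorem eLpNorm_lconvolution_le_lintegral_mul {f g : G → ℝ≥0∞} (hf : Measurable f)
    (hg : Measurable g) : eLpNorm (f ⋆ₗ[μ] g) 2 μ ≤ (∫⁻ x, f x ∂μ) * eLpNorm g 2 μ := by
  rw [← ENNReal.pow_le_pow_left_iff two_ne_zero, mul_pow, sq_eLpNorm_two, sq_eLpNorm_two]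
  calc ∫⁻ x, (f ⋆ₗ[μ] g) x ^ 2 ∂μ
      ≤ ∫⁻ x, (∫⁻ y, f y ∂μ) * (f ⋆ₗ[μ] fun y => g y ^ 2) x ∂μ :=
        lintegral_mono (lconvolution_sq_le hf hg)
    _ = (∫⁻ x, f x ∂μ) ^ 2 * ∫⁻ x, g x ^ 2 ∂μ := by
        rw [lintegral_const_mul _ (measurable_lconvolution _ hf (hg.pow_const 2)),
          lintegral_lconvolution hf (hg.pow_const 2), sq, mul_assoc]

variable [μ.IsNegInvariant]

theorem eLpNorm_lconvolution_le_mul_lintegral {f g : G → ℝ≥0∞} (hf : Measurable f)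
    (hg : Measurable g) : eLpNorm (f ⋆ₗ[μ] g) 2 μ ≤ eLpNorm f 2 μ * ∫⁻ x, g x ∂μ := by
  rw [lconvolution_comm, mul_comm]
  exact eLpNorm_lconvolution_le_lintegral_mul hg hf

theorem eLpNorm_dampedLConvolution_le {a f g : G → ℝ≥0∞} (ha : Measurable a)
    (hf : Measurable f) (hg : Measurable g) :
    eLpNorm (dampedLConvolution a f g μ) 2 μ ≤
      2 * eLpNorm a 2 μ * eLpNorm f 2 μ * eLpNorm g 2 μ := by
  rw [dampedLConvolution_eq ha hf hg]
  calc eLpNorm (g ⋆ₗ[μ] (a * f) + (a * g) ⋆ₗ[μ] f) 2 μ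
      ≤ eLpNorm (g ⋆ₗ[μ] (a * f)) 2 μ + eLpNorm ((a * g) ⋆ₗ[μ] f) 2 μ :=
        eLpNorm_add_le (by fun_prop) (by fun_prop) one_le_two
    _ ≤ eLpNorm g 2 μ * ∫⁻ x, a x * f x ∂μ + (∫⁻ x, a x * g x ∂μ) * eLpNorm f 2 μ :=
        add_le_add (eLpNorm_lconvolution_le_mul_lintegral hg (ha.mul hf))
          (eLpNorm_lconvolution_le_lintegral_mul (ha.mul hg) hf)
    _ ≤ eLpNorm g 2 μ * (eLpNorm a 2 μ * eLpNorm f 2 μ) +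
          (eLpNorm a 2 μ * eLpNorm g 2 μ) * eLpNorm f 2 μ := by
        gcongr <;> exact lintegral_mul_le_eLpNorm_two_mul_eLpNorm_two (by fun_prop) (by fun_prop)
    _ = 2 * eLpNorm a 2 μ * eLpNorm f 2 μ * eLpNorm g 2 μ := by ring

end LConvolution

section Japanese

variable {d : ℕ}

theorem one_le_jap (ξ : E d) : 1 ≤ jap ξ :=
  Real.one_le_sqrt.mpr (le_add_of_nonneg_right (by positivity))

theorem jap_pos (ξ : E d) : 0 < jap ξ := one_pos.trans_le (one_le_jap ξ)

theorem continuous_jap : Continuous (jap (d := d)) := by unfold jap; fun_prop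

theorem jap_add_le (a b : E d) : jap (a + b) ≤ jap a + jap b := by
  have hsq : ∀ ζ : E d, jap ζ ^ 2 = 1 + ‖ζ‖ ^ 2 := fun ζ => Real.sq_sqrt (by positivity)
  have hle : ∀ ζ : E d, ‖ζ‖ ≤ jap ζ := fun ζ =>
    Real.le_sqrt_of_sq_le (le_add_of_nonneg_left zero_le_one)
  rw [jap, Real.sqrt_le_iff]
  refine ⟨add_nonneg (jap_pos a).le (jap_pos b).le, ?_⟩
  nlinarith [norm_add_le a b, hle a, hle b, hsq a, hsq b, norm_nonneg a, norm_nonneg b,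
    norm_nonneg (a + b), mul_le_mul (hle a) (hle b) (norm_nonneg b) (jap_pos a).le]

theorem continuous_jap_rpow (s : ℝ) : Continuous fun ζ : E d => jap ζ ^ s :=
  continuous_jap.rpow_const fun ζ => Or.inl (jap_pos ζ).ne'

theorem memLp_exp_neg_mul_jap_rpow {σ c : ℝ} (hσ : 0 < σ) (hc : 0 < c) :
    MemLp (fun ζ : E d => exp (-c * jap ζ ^ σ)) 2 volume := by
  obtain ⟨C, hC⟩ := exists_rpow_le_mul_exp_mul_rpow hσ (mul_pos two_pos hc) (d + 1)
  have hcont : Continuous fun ζ : E d => exp (-c * jap ζ ^ σ) :=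
    (continuous_const.mul (continuous_jap_rpow σ)).rexp
  rw [memLp_two_iff_integrable_sq hcont.aestronglyMeasurable]
  refine ((integrable_rpow_neg_one_add_norm_sq (r := d + 1) (by simp)).const_mul C).mono'
    (hcont.pow 2).aestronglyMeasurable (Filter.Eventually.of_forall fun ζ => ?_)
  have hsq : (1 + ‖ζ‖ ^ 2) ^ (-((d : ℝ) + 1) / 2) = (jap ζ ^ ((d : ℝ) + 1))⁻¹ := by
    rw [jap, Real.sqrt_eq_rpow, ← Real.rpow_mul (by positivity), ← Real.rpow_neg (by positivity)]
    ring_nf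
  have hJ := jap_pos ζ
  rw [Real.norm_of_nonneg (by positivity), hsq, ← exp_nat_mul, ← div_eq_mul_inv,
    le_div_iff₀ (by positivity)]
  calc exp (↑2 * (-c * jap ζ ^ σ)) * jap ζ ^ ((d : ℝ) + 1)
      ≤ exp (↑2 * (-c * jap ζ ^ σ)) * (C * exp (2 * c * jap ζ ^ σ)) := by
        gcongr; exact hC _ (one_le_jap ζ)
    _ = C := by rw [mul_left_comm, ← exp_add]; ring_nf; simp

def japWeight (m : ℝ) (ζ : E d) : ℝ≥0∞ := ENNReal.ofReal (jap ζ ^ m)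

def expWeight (τ σ : ℝ) (ζ : E d) : ℝ≥0∞ := ENNReal.ofReal (exp (τ * jap ζ ^ σ))

@[fun_prop]
theorem measurable_japWeight (m : ℝ) : Measurable (japWeight m : E d → ℝ≥0∞) :=
  (continuous_jap_rpow m).measurable.ennreal_ofReal

@[fun_prop]
theorem measurable_expWeight (τ σ : ℝ) : Measurable (expWeight τ σ : E d → ℝ≥0∞) :=
  (continuous_const.mul (continuous_jap_rpow σ)).rexp.measurable.ennreal_ofReal

theorem eLpNorm_expWeight_ne_top {σ c : ℝ} (hσ : 0 < σ) (hc : 0 < c) :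
    eLpNorm (expWeight (-c) σ : E d → ℝ≥0∞) 2 volume ≠ ⊤ := by
  simpa [expWeight, ← eLpNorm_enorm, Real.enorm_of_nonneg (exp_nonneg _)] using
    (memLp_exp_neg_mul_jap_rpow (d := d) hσ hc).eLpNorm_lt_top.ne

variable {σ τ m : ℝ}

theorem ofReal_jap_rpow_mul_exp_le (hσ0 : 0 ≤ σ) (hσ1 : σ ≤ 1) (hτ : 0 ≤ τ) (hm : 0 ≤ m)
    (ξ η : E d) :
    ENNReal.ofReal (jap ξ ^ m * exp (τ * jap ξ ^ σ - τ * jap η ^ σ)) ≤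
      ENNReal.ofReal (2 ^ m) * (japWeight m (ξ - η) + japWeight m η) * expWeight τ σ (ξ - η) *
        (expWeight (-(τ * (2 - 2 ^ σ))) σ (ξ - η) + expWeight (-(τ * (2 - 2 ^ σ))) σ η) := by
  have hker := rpow_mul_exp_sub_le hσ0 hσ1 hτ hm (jap_pos (ξ - η)).le (jap_pos η).le
    (jap_pos ξ).le (by simpa using jap_add_le (ξ - η) η)
  refine (ENNReal.ofReal_le_ofReal hker).trans_eq ?_
  simp only [japWeight, expWeight]
  rw [ENNReal.ofReal_mul, ENNReal.ofReal_mul, ENNReal.ofReal_mul, ENNReal.ofReal_add,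
    ENNReal.ofReal_add]
  all_goals (try simp only [jap]); positivity

theorem ofReal_jap_rpow_mul_enorm_integral_le (hσ0 : 0 ≤ σ) (hσ1 : σ ≤ 1) (hτ : 0 ≤ τ)
    (hm : 0 ≤ m) {f w : E d → ℂ} (hf : Measurable f) (hw : Measurable w) (ξ : E d) :
    ENNReal.ofReal (jap ξ ^ m) *
        ‖∫ η, exp (τ * jap ξ ^ σ - τ * jap η ^ σ) • (f (ξ - η) * w η)‖ₑ ≤
      ENNReal.ofReal (2 ^ m) *
        (dampedLConvolution (expWeight (-(τ * (2 - 2 ^ σ))) σ)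
            (expWeight τ σ * japWeight m * fun ζ => ‖f ζ‖ₑ) (fun ζ => ‖w ζ‖ₑ) volume ξ +
          dampedLConvolution (expWeight (-(τ * (2 - 2 ^ σ))) σ)
            (expWeight τ σ * fun ζ => ‖f ζ‖ₑ) (japWeight m * fun ζ => ‖w ζ‖ₑ) volume ξ) := by
  set a : E d → ℝ≥0∞ := expWeight (-(τ * (2 - 2 ^ σ))) σ
  calc ENNReal.ofReal (jap ξ ^ m) *
        ‖∫ η, exp (τ * jap ξ ^ σ - τ * jap η ^ σ) • (f (ξ - η) * w η)‖ₑ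
      ≤ ENNReal.ofReal (jap ξ ^ m) *
          ∫⁻ η, ‖exp (τ * jap ξ ^ σ - τ * jap η ^ σ) • (f (ξ - η) * w η)‖ₑ := by
        gcongr; exact enorm_integral_le_lintegral_enorm _
    _ = ∫⁻ η, ENNReal.ofReal (jap ξ ^ m * exp (τ * jap ξ ^ σ - τ * jap η ^ σ)) *
          (‖f (ξ - η)‖ₑ * ‖w η‖ₑ) := by
        rw [← lintegral_const_mul' _ _ ENNReal.ofReal_ne_top]
        refine lintegral_congr fun η => ?_
        rw [enorm_smul, enorm_mul, Real.enorm_of_nonneg (exp_nonneg _),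
          ENNReal.ofReal_mul (Real.rpow_nonneg (jap_pos ξ).le m), mul_assoc]
    _ ≤ ∫⁻ η, ENNReal.ofReal (2 ^ m) *
          ((a (ξ - η) + a η) * (expWeight τ σ (ξ - η) * japWeight m (ξ - η) * ‖f (ξ - η)‖ₑ) *
              ‖w η‖ₑ +
            (a (ξ - η) + a η) * (expWeight τ σ (ξ - η) * ‖f (ξ - η)‖ₑ) *
              (japWeight m η * ‖w η‖ₑ)) := by
        refine lintegral_mono fun η => ?_
        refine (mul_le_mul_left (ofReal_jap_rpow_mul_exp_le hσ0 hσ1 hτ hm ξ η) _).trans_eq ?_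
        ring
    _ = _ := by
        rw [lintegral_const_mul' _ _ ENNReal.ofReal_ne_top, lintegral_add_left (by fun_prop)]
        rfl

theorem eLpNorm_ofReal_jap_rpow_mul_enorm_integral_le (hσ0 : 0 ≤ σ) (hσ1 : σ ≤ 1)
    (hτ : 0 ≤ τ) (hm : 0 ≤ m) {f w : E d → ℂ} (hf : Measurable f) (hw : Measurable w) :
    eLpNorm (fun ξ => ENNReal.ofReal (jap ξ ^ m) *
        ‖∫ η, exp (τ * jap ξ ^ σ - τ * jap η ^ σ) • (f (ξ - η) * w η)‖ₑ) 2 volume ≤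
      ENNReal.ofReal (2 ^ m) *
        (2 * eLpNorm (expWeight (-(τ * (2 - 2 ^ σ))) σ : E d → ℝ≥0∞) 2 volume) *
        (eLpNorm (expWeight τ σ * japWeight m * fun ζ => ‖f ζ‖ₑ) 2 volume *
            eLpNorm (fun ζ => ‖w ζ‖ₑ) 2 volume +
          eLpNorm (expWeight τ σ * fun ζ => ‖f ζ‖ₑ) 2 volume *
            eLpNorm (japWeight m * fun ζ => ‖w ζ‖ₑ) 2 volume) := by
  set a : E d → ℝ≥0∞ := expWeight (-(τ * (2 - 2 ^ σ))) σ
  set F : E d → ℝ≥0∞ := fun ζ => ‖f ζ‖ₑ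
  set W : E d → ℝ≥0∞ := fun ζ => ‖w ζ‖ₑ
  have ha : Measurable a := measurable_expWeight _ _
  have hE := measurable_expWeight (d := d) τ σ
  have hP := measurable_japWeight (d := d) m
  have hF : Measurable F := hf.enorm
  have hW : Measurable W := hw.enorm
  calc _ ≤ ENNReal.ofReal (2 ^ m) *
          eLpNorm (dampedLConvolution a (expWeight τ σ * japWeight m * F) W volume +
            dampedLConvolution a (expWeight τ σ * F) (japWeight m * W) volume) 2 volume :=
        eLpNorm_le_mul_eLpNorm_of_ae_le_mul'' 2 (by fun_prop) (ae_of_all _ fun ξ =>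
          ofReal_jap_rpow_mul_enorm_integral_le hσ0 hσ1 hτ hm hf hw ξ)
    _ ≤ ENNReal.ofReal (2 ^ m) *
          (eLpNorm (dampedLConvolution a (expWeight τ σ * japWeight m * F) W volume) 2 volume +
            eLpNorm (dampedLConvolution a (expWeight τ σ * F) (japWeight m * W) volume) 2
              volume) := by
        gcongr; exact eLpNorm_add_le (by fun_prop) (by fun_prop) one_le_two
    _ ≤ _ := by
        refine (mul_le_mul' le_rfl (add_le_add
          (eLpNorm_dampedLConvolution_le (μ := volume) ha ((hE.mul hP).mul hF) hW)
          (eLpNorm_dampedLConvolution_le (μ := volume) ha (hE.mul hF) (hP.mul hW)))).trans_eq ?_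
        ring

theorem eLpNorm_jap_rpow_smul_integral_le (hσ0 : 0 ≤ σ) (hσ1 : σ ≤ 1) (hτ : 0 ≤ τ)
    (hm : 0 ≤ m) {f w : E d → ℂ} (hf : Measurable f) (hw : Measurable w) :
    eLpNorm (fun ξ : E d => jap ξ ^ m •
        ∫ η : E d, exp (τ * jap ξ ^ σ - τ * jap η ^ σ) • (f (ξ - η) * w η)) 2 volume ≤
      ENNReal.ofReal (2 ^ m) *
        (2 * eLpNorm (expWeight (-(τ * (2 - 2 ^ σ))) σ : E d → ℝ≥0∞) 2 volume) *
        (eLpNorm (fun ξ : E d => (exp (τ * jap ξ ^ σ) * jap ξ ^ m) • f ξ) 2 volume *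
            eLpNorm w 2 volume +
          eLpNorm (fun ξ : E d => exp (τ * jap ξ ^ σ) • f ξ) 2 volume *
            eLpNorm (fun ξ : E d => jap ξ ^ m • w ξ) 2 volume) := by
  have hexp : ∀ ξ : E d, 0 ≤ exp (τ * jap ξ ^ σ) := fun ξ => exp_nonneg _
  have hjap : ∀ ξ : E d, 0 ≤ jap ξ ^ m := fun ξ => Real.rpow_nonneg (jap_pos ξ).le m
  have hEPF : eLpNorm (fun ξ => (exp (τ * jap ξ ^ σ) * jap ξ ^ m) • f ξ) 2 volume =
      eLpNorm (expWeight τ σ * japWeight m * fun ξ => ‖f ξ‖ₑ) 2 volume := by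
    rw [← eLpNorm_ofReal_mul_enorm fun ξ => mul_nonneg (hexp ξ) (hjap ξ)]
    simp only [ENNReal.ofReal_mul (hexp _)]
    rfl
  have hEF : eLpNorm (fun ξ => exp (τ * jap ξ ^ σ) • f ξ) 2 volume =
      eLpNorm (expWeight τ σ * fun ξ => ‖f ξ‖ₑ) 2 volume :=
    (eLpNorm_ofReal_mul_enorm hexp f 2).symm
  have hPW : eLpNorm (fun ξ => jap ξ ^ m • w ξ) 2 volume =
      eLpNorm (japWeight m * fun ξ => ‖w ξ‖ₑ) 2 volume :=
    (eLpNorm_ofReal_mul_enorm hjap w 2).symm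
  rw [hEPF, hEF, hPW, ← eLpNorm_enorm w, ← eLpNorm_ofReal_mul_enorm hjap]
  exact eLpNorm_ofReal_jap_rpow_mul_enorm_integral_le hσ0 hσ1 hτ hm hf hw

end Japanese

theorem stmt_7_general (d : ℕ) (σ τ m : ℝ)
    (hσ0 : 0 < σ) (hσ1 : σ < 1) (hτ : 0 < τ) (hm : 0 ≤ m) :
    ∃ C : ℝ, 0 < C ∧
      ∀ (f w : E d → ℂ), Measurable f → Measurable w →
        MemLp (fun ξ : E d => (Real.exp (τ * jap ξ ^ σ) * jap ξ ^ m) • f ξ) 2 volume →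
        MemLp (fun ξ : E d => Real.exp (τ * jap ξ ^ σ) • f ξ) 2 volume →
        MemLp (fun ξ : E d => jap ξ ^ m • w ξ) 2 volume →
        MemLp w 2 volume →
        eLpNorm (fun ξ : E d => jap ξ ^ m •
            ∫ η : E d, Real.exp (τ * jap ξ ^ σ - τ * jap η ^ σ) • (f (ξ - η) * w η)) 2 volume
          ≤ ENNReal.ofReal C *
              (eLpNorm (fun ξ : E d =>
                  (Real.exp (τ * jap ξ ^ σ) * jap ξ ^ m) • f ξ) 2 volume *
                eLpNorm w 2 volume +
               eLpNorm (fun ξ : E d => Real.exp (τ * jap ξ ^ σ) • f ξ) 2 volume *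
                eLpNorm (fun ξ : E d => jap ξ ^ m • w ξ) 2 volume) := by
  have hc : 0 < τ * (2 - 2 ^ σ) :=
    mul_pos hτ (sub_pos.mpr (by simpa using Real.rpow_lt_rpow_of_exponent_lt one_lt_two hσ1))
  set K := eLpNorm (expWeight (-(τ * (2 - 2 ^ σ))) σ : E d → ℝ≥0∞) 2 volume
  have hK : K ≠ ⊤ := eLpNorm_expWeight_ne_top hσ0 hc
  refine ⟨2 ^ m * (2 * (K.toReal + 1)), by positivity, fun f w hf hw _ _ _ _ => ?_⟩
  refine (eLpNorm_jap_rpow_smul_integral_le hσ0.le hσ1.le hτ.le hm hf hw).trans ?_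
  rw [ENNReal.ofReal_mul (by positivity), ENNReal.ofReal_mul zero_le_two,
    ENNReal.ofReal_add ENNReal.toReal_nonneg zero_le_one, ENNReal.ofReal_toReal hK,
    ENNReal.ofReal_ofNat, ENNReal.ofReal_one]
  gcongr
  exact le_self_add

/-- Fourier-side boundedness of the conjugated multiplication
operator, with Sobolev correction of order `m`:
`‖⟨·⟩^m g‖_{L²} ≤ C (‖e^{τ⟨·⟩^σ}⟨·⟩^m f‖_{L²} ‖w‖_{L²} + ‖e^{τ⟨·⟩^σ} f‖_{L²} ‖⟨·⟩^m w‖_{L²})`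
for `g(ξ) = ∫ e^{τ⟨ξ⟩^σ − τ⟨η⟩^σ} f(ξ−η) w(η) dη`. -/
theorem stmt_7 (d : ℕ) (hd : 1 ≤ d) (σ τ m : ℝ)
    (hσ0 : 0 < σ) (hσ1 : σ < 1) (hτ : 0 < τ) (hm : 0 ≤ m) :
    ∃ C : ℝ, 0 < C ∧
      ∀ (f w : E d → ℂ), Measurable f → Measurable w →
        MemLp (fun ξ : E d => (Real.exp (τ * jap ξ ^ σ) * jap ξ ^ m) • f ξ) 2 volume →
        MemLp (fun ξ : E d => Real.exp (τ * jap ξ ^ σ) • f ξ) 2 volume →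
        MemLp (fun ξ : E d => jap ξ ^ m • w ξ) 2 volume →
        MemLp w 2 volume →
        eLpNorm (fun ξ : E d => jap ξ ^ m •
            ∫ η : E d, Real.exp (τ * jap ξ ^ σ - τ * jap η ^ σ) • (f (ξ - η) * w η)) 2 volume
          ≤ ENNReal.ofReal C *
              (eLpNorm (fun ξ : E d =>
                  (Real.exp (τ * jap ξ ^ σ) * jap ξ ^ m) • f ξ) 2 volume *
                eLpNorm w 2 volume +
               eLpNorm (fun ξ : E d => Real.exp (τ * jap ξ ^ σ) • f ξ) 2 volume *
                eLpNorm (fun ξ : E d => jap ξ ^ m • w ξ) 2 volume) :=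
  stmt_7_general d σ τ m hσ0 hσ1 hτ hm
end
end

section
/- Let σ ∈ (0,1) and 0 < τ' < τ. Then for every K > 1 and all ξ, η ∈ ℝ^d with |ξ − η| ≤ |η|/K, one has exp( τ'⟨ξ⟩^σ − τ⟨η⟩^σ ) ≤ exp( −( τ − (1 + K^σ − (K−1)^σ)·τ' ) · ⟨η⟩^σ ). In particular, if K is large enough (depending only on σ, τ, τ') then τ − (1 + K^σ − (K−1)^σ)·τ' > 0 and the left-hand side is bounded by a decaying Gaussian-type weight in ⟨η⟩^σ. -/
/-! On the region `‖ξ - η‖ ≤ ‖η‖ / K` the triangle inequality gives `⟨ξ⟩ ≤ (1 + 1/K) ⟨η⟩`, so it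
suffices that `(1 + 1/K)^σ ≤ 1 + K^σ - (K - 1)^σ`. Tangent-line bounds for the concave function
`t ↦ t^σ` put `σ/K` between the two sides, and also give `K^σ - (K - 1)^σ ≤ σ (K - 1)^(σ - 1) → 0`,
which makes the coefficient `τ - (1 + K^σ - (K - 1)^σ) τ'` tend to `τ - τ' > 0`. -/

open MeasureTheory Real
open scoped FourierTransform ENNReal

noncomputable section

open Filter Topology

lemma rpow_le_rpow_add_mul_rpow_sub_one_mul_sub {x y p : ℝ} (hx : 0 < x) (hy : 0 ≤ y)
    (hp0 : 0 ≤ p) (hp1 : p ≤ 1) : y ^ p ≤ x ^ p + p * x ^ (p - 1) * (y - x) := by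
  have hs : -1 ≤ (y - x) / x := by rw [le_div_iff₀ hx]; linarith
  calc y ^ p = (x * (1 + (y - x) / x)) ^ p := by congr 1; field_simp; ring
    _ = x ^ p * (1 + (y - x) / x) ^ p := mul_rpow hx.le (by linarith)
    _ ≤ x ^ p * (1 + p * ((y - x) / x)) := by
        gcongr; exact rpow_one_add_le_one_add_mul_self hs hp0 hp1
    _ = x ^ p + p * x ^ (p - 1) * (y - x) := by rw [rpow_sub_one hx.ne']; field_simp

section Increment

variable {K σ : ℝ}

lemma rpow_sub_rpow_sub_one_le (hK : 1 < K) (hσ0 : 0 ≤ σ) (hσ1 : σ ≤ 1) :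
    K ^ σ - (K - 1) ^ σ ≤ σ * (K - 1) ^ (σ - 1) := by
  have := rpow_le_rpow_add_mul_rpow_sub_one_mul_sub (y := K) (sub_pos.2 hK) (by linarith) hσ0 hσ1
  rw [sub_sub_cancel, mul_one] at this
  linarith

lemma div_le_rpow_sub_rpow_sub_one (hK : 1 ≤ K) (hσ0 : 0 ≤ σ) (hσ1 : σ ≤ 1) :
    σ / K ≤ K ^ σ - (K - 1) ^ σ := by
  have hK0 : 0 < K := by linarith
  have hmvt := rpow_le_rpow_add_mul_rpow_sub_one_mul_sub (y := K - 1) hK0 (by linarith) hσ0 hσ1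
  have hinv : K ^ (-1 : ℝ) ≤ K ^ (σ - 1) := rpow_le_rpow_of_exponent_le hK (by linarith)
  rw [rpow_neg_one] at hinv
  calc σ / K = σ * K⁻¹ := div_eq_mul_inv _ _
    _ ≤ σ * K ^ (σ - 1) := by gcongr
    _ ≤ K ^ σ - (K - 1) ^ σ := by linarith

lemma one_add_inv_rpow_le (hK : 1 ≤ K) (hσ0 : 0 ≤ σ) (hσ1 : σ ≤ 1) :
    (1 + K⁻¹) ^ σ ≤ 1 + K ^ σ - (K - 1) ^ σ := by
  have hbern := rpow_one_add_le_one_add_mul_self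
    (le_trans (by norm_num) (inv_nonneg.2 (by linarith : (0 : ℝ) ≤ K))) hσ0 hσ1
  have := div_le_rpow_sub_rpow_sub_one hK hσ0 hσ1
  rw [← div_eq_mul_inv] at hbern
  linarith

lemma tendsto_rpow_sub_rpow_sub_one_atTop (hσ0 : 0 ≤ σ) (hσ1 : σ < 1) :
    Tendsto (fun K : ℝ => K ^ σ - (K - 1) ^ σ) atTop (𝓝 0) := by
  have hdecay : Tendsto (fun K : ℝ => σ * (K - 1) ^ (σ - 1)) atTop (𝓝 0) := by
    simpa [neg_sub, sub_eq_add_neg] using ((tendsto_rpow_neg_atTop (sub_pos.2 hσ1)).comp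
      (tendsto_atTop_add_const_right atTop (-1) tendsto_id)).const_mul σ
  refine tendsto_of_tendsto_of_tendsto_of_le_of_le' tendsto_const_nhds hdecay ?_ ?_
  · filter_upwards [eventually_ge_atTop 1] with K hK
    exact sub_nonneg.2 (rpow_le_rpow (by linarith) (by linarith) hσ0)
  · filter_upwards [eventually_gt_atTop 1] with K hK
    exact rpow_sub_rpow_sub_one_le hK hσ0 hσ1.le

end Increment

section JapaneseBracket

variable {d : ℕ}

lemma jap_nonneg (ξ : E d) : 0 ≤ jap ξ := sqrt_nonneg _

lemma norm_le_jap (ξ : E d) : ‖ξ‖ ≤ jap ξ :=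
  le_sqrt_of_sq_le (by linarith)

lemma jap_le_jap_add_norm_sub (ξ η : E d) : jap ξ ≤ jap η + ‖ξ - η‖ := by
  have htri : ‖ξ‖ ≤ ‖η‖ + ‖ξ - η‖ := norm_le_norm_add_norm_sub' ξ η
  have hsq : jap η ^ 2 = 1 + ‖η‖ ^ 2 := sq_sqrt (by positivity)
  have hη := norm_le_jap η
  rw [jap, sqrt_le_left (by positivity [jap_nonneg η])]
  nlinarith [norm_nonneg ξ, norm_nonneg η, norm_nonneg (ξ - η)]

lemma jap_le_of_norm_sub_le {K : ℝ} (hK : 0 < K) {ξ η : E d} (h : ‖ξ - η‖ ≤ ‖η‖ / K) :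
    jap ξ ≤ (1 + K⁻¹) * jap η :=
  calc jap ξ ≤ jap η + ‖ξ - η‖ := jap_le_jap_add_norm_sub ξ η
    _ ≤ jap η + jap η / K := by gcongr; exact h.trans (by gcongr; exact norm_le_jap η)
    _ = (1 + K⁻¹) * jap η := by ring

lemma rpow_jap_le_of_norm_sub_le {K σ : ℝ} (hK : 1 < K) (hσ0 : 0 ≤ σ) (hσ1 : σ ≤ 1)
    {ξ η : E d} (h : ‖ξ - η‖ ≤ ‖η‖ / K) :
    jap ξ ^ σ ≤ (1 + K ^ σ - (K - 1) ^ σ) * jap η ^ σ :=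
  calc jap ξ ^ σ ≤ ((1 + K⁻¹) * jap η) ^ σ :=
        rpow_le_rpow (jap_nonneg ξ) (jap_le_of_norm_sub_le (by linarith) h) hσ0
    _ = (1 + K⁻¹) ^ σ * jap η ^ σ := mul_rpow (by positivity) (jap_nonneg η)
    _ ≤ (1 + K ^ σ - (K - 1) ^ σ) * jap η ^ σ :=
        mul_le_mul_of_nonneg_right (one_add_inv_rpow_le hK.le hσ0 hσ1) (rpow_nonneg (jap_nonneg η) σ)

end JapaneseBracket

/-- Estimate of the exponential weight in the region
`|ξ−η| ≤ |η|/K`: `exp(τ'⟨ξ⟩^σ − τ⟨η⟩^σ) ≤ exp(−(τ − (1 + K^σ − (K−1)^σ)τ')⟨η⟩^σ)`;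
and for `K` large enough (depending only on `σ, τ, τ'`) the coefficient
`τ − (1 + K^σ − (K−1)^σ)τ'` is positive. -/
theorem stmt_12 (σ τ' τ : ℝ) (hσ0 : 0 < σ) (hσ1 : σ < 1)
    (hτ'0 : 0 < τ') (hτ'τ : τ' < τ) :
    (∀ (K : ℝ), 1 < K → ∀ (d : ℕ) (ξ η : E d), ‖ξ - η‖ ≤ ‖η‖ / K →
      Real.exp (τ' * jap ξ ^ σ - τ * jap η ^ σ)
        ≤ Real.exp (-(τ - (1 + K ^ σ - (K - 1) ^ σ) * τ') * jap η ^ σ)) ∧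
    ∃ K₀ : ℝ, 1 < K₀ ∧ ∀ K : ℝ, K₀ ≤ K →
      0 < τ - (1 + K ^ σ - (K - 1) ^ σ) * τ' := by
  refine ⟨fun K hK d ξ η hξη => exp_le_exp.2 ?_, ?_⟩
  · have := rpow_jap_le_of_norm_sub_le hK hσ0.le hσ1.le hξη
    nlinarith
  · have hlim : Tendsto (fun K : ℝ => τ - (1 + K ^ σ - (K - 1) ^ σ) * τ') atTop (𝓝 (τ - τ')) := by
      simpa [add_sub_assoc] using tendsto_const_nhds.sub
        (((tendsto_rpow_sub_rpow_sub_one_atTop hσ0.le hσ1).const_add 1).mul_const τ')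
    obtain ⟨K₀, hK₀⟩ := ((hlim.eventually (lt_mem_nhds (sub_pos.2 hτ'τ))).and
      (eventually_gt_atTop 1)).exists_forall_of_atTop
    exact ⟨K₀, (hK₀ K₀ le_rfl).2, fun K hK => (hK₀ K hK).1⟩
end
end
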